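/- Let b : [0,T] × ℝ^d → ℝ^d be measurable, continuous in the second variable, and of at most linear growth: ‖b(t,y)‖ ≤ C(1 + ‖y‖). If X = (X_t)_{t∈[0,T]} is a stochastic process with continuous paths, integrable at each time, satisfying X_t = x + ∫₀ᵗ b(s, E[X_s]) ds + B_t almost surely for each t (where B is a Brownian motion with E[B_t]=0), and t ↦ E[X_t] is continuous, then u(t) := E[X_t] solves the ODE u'(t) = b(t, u(t)) for a.e. t ∈ [0,T] with u(0) = x. -/

import Mathlib

open MeasureTheory intervalIntegral Set
open scoped Interval

/-! Taking expectations in the equation for `X` removes the centred noise `B`, so `u = E[X]`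
satisfies the integral equation `u t = x + ∫₀ᵗ b(s, u s) ds` on `[0, T]`. Along the continuous
curve `u` the linear growth bound dominates `s ↦ b(s, u s)` by the continuous function
`C (1 + ‖u s‖)`, so the integrand is integrable, and the Lebesgue differentiation theorem
differentiates the integral equation at almost every time. -/

theorem integral_eq_of_ae_eq_const_add {Ω E : Type*} [MeasurableSpace Ω] {μ : Measure Ω}
    [IsProbabilityMeasure μ] [NormedAddCommGroup E] [NormedSpace ℝ E] [CompleteSpace E]
    {X B : Ω → E} {c : E}
    (hB : Integrable B μ) (hB0 : ∫ ω, B ω ∂μ = 0) (hX : ∀ᵐ ω ∂μ, X ω = c + B ω) :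
    ∫ ω, X ω ∂μ = c := by
  rw [integral_congr_ae hX, integral_add (integrable_const c) hB, hB0, add_zero]
  simp

theorem intervalIntegrable_comp_of_norm_le_linear {E F : Type*} [NormedAddCommGroup E]
    [MeasurableSpace E] [BorelSpace E] [NormedAddCommGroup F] [MeasurableSpace F]
    [OpensMeasurableSpace F] [SecondCountableTopology F] {b : ℝ → E → F} {u : ℝ → E}
    {C a c : ℝ}
    (hbm : Measurable fun p : ℝ × E => b p.1 p.2)
    (hbg : ∀ t y, ‖b t y‖ ≤ C * (1 + ‖y‖))
    (hu : ContinuousOn u (uIcc a c)) :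
    IntervalIntegrable (fun s => b s (u s)) volume a c := by
  have hum : AEMeasurable u (volume.restrict (Ι a c)) :=
    (hu.mono uIoc_subset_uIcc).aemeasurable measurableSet_uIoc
  have hdom : IntervalIntegrable (fun s => C * (1 + ‖u s‖)) volume a c :=
    (continuousOn_const.mul (continuousOn_const.add hu.norm)).intervalIntegrable
  have hm : AEMeasurable (fun s => b s (u s)) (volume.restrict (Ι a c)) :=
    hbm.comp_aemeasurable (aemeasurable_id.prodMk hum)
  exact hdom.mono_fun' hm.aestronglyMeasurable (Filter.Eventually.of_forall fun s => hbg s (u s))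

theorem ae_hasDerivAt_of_eqOn_const_add_integral {E : Type*} [NormedAddCommGroup E]
    [NormedSpace ℝ E] [CompleteSpace E] {u f : ℝ → E} {a b : ℝ} {x : E}
    (hf : IntervalIntegrable f volume a b) (hu : ∀ t ∈ Icc a b, u t = x + ∫ s in a..t, f s) :
    ∀ᵐ t ∂volume.restrict (Icc a b), HasDerivAt u (f t) t := by
  have hIoo : ∀ᵐ t ∂volume.restrict (Icc a b), t ∈ Ioo a b := by
    rw [← Measure.restrict_congr_set Ioo_ae_eq_Icc]
    exact ae_restrict_mem measurableSet_Ioo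
  filter_upwards [ae_restrict_of_ae hf.ae_hasDerivAt_integral, hIoo] with t hderiv ht
  have hF := hderiv (Icc_subset_uIcc (Ioo_subset_Icc_self ht)) a left_mem_uIcc
  refine (hF.const_add x).congr_of_eventuallyEq ?_
  filter_upwards [Icc_mem_nhds ht.1 ht.2] with r hr using hu r hr

theorem probabilistic_caratheodory_general {d : ℕ} (T : ℝ) (hT : 0 < T) (C : ℝ)
    (b : ℝ → EuclideanSpace ℝ (Fin d) → EuclideanSpace ℝ (Fin d))
    (hbm : Measurable (fun p : ℝ × EuclideanSpace ℝ (Fin d) => b p.1 p.2))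
    (hbg : ∀ t y, ‖b t y‖ ≤ C * (1 + ‖y‖))
    {Ω : Type*} [MeasureSpace Ω] [IsProbabilityMeasure (volume : Measure Ω)]
    (x : EuclideanSpace ℝ (Fin d))
    (X B : ℝ → Ω → EuclideanSpace ℝ (Fin d))
    (hBint : ∀ t ∈ Set.Icc (0:ℝ) T, Integrable (B t))
    (hBmean : ∀ t ∈ Set.Icc (0:ℝ) T, (∫ ω, B t ω) = 0)
    (u : ℝ → EuclideanSpace ℝ (Fin d))
    (hu : ∀ t, u t = ∫ ω, X t ω)
    (hucont : ContinuousOn u (Set.Icc 0 T))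
    (hSDE : ∀ t ∈ Set.Icc (0:ℝ) T, ∀ᵐ ω ∂(volume : Measure Ω),
        X t ω = x + (∫ s in (0:ℝ)..t, b s (u s)) + B t ω) :
    u 0 = x ∧
      ∀ᵐ t ∂(volume.restrict (Set.Icc (0:ℝ) T)), HasDerivAt u (b t (u t)) t := by
  have hmean : ∀ t ∈ Icc (0:ℝ) T, u t = x + ∫ s in (0:ℝ)..t, b s (u s) := fun t ht =>
    (hu t).trans (integral_eq_of_ae_eq_const_add (hBint t ht) (hBmean t ht) (hSDE t ht))
  have hint : IntervalIntegrable (fun s => b s (u s)) volume 0 T :=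
    intervalIntegrable_comp_of_norm_le_linear hbm hbg (by rwa [uIcc_of_le hT.le])
  exact ⟨by simpa using hmean 0 ⟨le_rfl, hT.le⟩,
    ae_hasDerivAt_of_eqOn_const_add_integral hint hmean⟩

theorem probabilistic_caratheodory {d : ℕ} (T : ℝ) (hT : 0 < T) (C : ℝ)
    (b : ℝ → EuclideanSpace ℝ (Fin d) → EuclideanSpace ℝ (Fin d))
    (hbm : Measurable (fun p : ℝ × EuclideanSpace ℝ (Fin d) => b p.1 p.2))
    (hbc : ∀ t, Continuous (b t))
    (hbg : ∀ t y, ‖b t y‖ ≤ C * (1 + ‖y‖))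
    {Ω : Type*} [MeasureSpace Ω] [IsProbabilityMeasure (volume : Measure Ω)]
    (x : EuclideanSpace ℝ (Fin d))
    (X B : ℝ → Ω → EuclideanSpace ℝ (Fin d))
    (hXcont : ∀ ω, ContinuousOn (fun t => X t ω) (Set.Icc 0 T))
    (hXint : ∀ t ∈ Set.Icc (0:ℝ) T, Integrable (X t))
    (hBint : ∀ t ∈ Set.Icc (0:ℝ) T, Integrable (B t))
    (hBmean : ∀ t ∈ Set.Icc (0:ℝ) T, (∫ ω, B t ω) = 0)
    (u : ℝ → EuclideanSpace ℝ (Fin d))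
    (hu : ∀ t, u t = ∫ ω, X t ω)
    (hucont : ContinuousOn u (Set.Icc 0 T))
    (hSDE : ∀ t ∈ Set.Icc (0:ℝ) T, ∀ᵐ ω ∂(volume : Measure Ω),
        X t ω = x + (∫ s in (0:ℝ)..t, b s (u s)) + B t ω) :
    u 0 = x ∧
      ∀ᵐ t ∂(volume.restrict (Set.Icc (0:ℝ) T)), HasDerivAt u (b t (u t)) t :=
  probabilistic_caratheodory_general T hT C b hbm hbg x X B hBint hBmean u hu hucont hSDE
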